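/- arXiv:2201.01640 — 2 statements merged into one kernel-verified Lean document; each statement's English description precedes it below -/
import Mathlib

section
/- Let G be a connected graph on n ≥ 2 vertices and H a connected graph on m ≥ 2 vertices, with disjoint vertex sets. Suppose G is a frame graph in a complex inner product space of dimension d exactly when n' ≤ d ≤ n, and H is a frame graph in a complex inner product space of dimension d exactly when m' ≤ d ≤ m, where n' ≥ m'. Then the join G ∨ H is a frame graph in a complex inner product space of dimension d exactly when n' ≤ d ≤ n + m. Equivalently, mr_+^C(G ∨ H) = max{mr_+^C(G), mr_+^C(H)}. -/
open scoped ComplexOrder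

/-- The minimum positive semidefinite rank of a simple graph `G` over the field `𝕜`
(`𝕜 = ℝ` gives `mr₊^ℝ`, `𝕜 = ℂ` gives `mr₊^ℂ`): the minimum rank over all positive
semidefinite Hermitian matrices whose off-diagonal zero/nonzero pattern matches `G`. -/
noncomputable def mrPlus (𝕜 : Type) [RCLike 𝕜] {V : Type} [Fintype V] [DecidableEq V]
    (G : SimpleGraph V) : ℕ :=
  sInf {r : ℕ | ∃ A : Matrix V V 𝕜, A.PosSemidef ∧
    (∀ i j : V, i ≠ j → (A i j ≠ 0 ↔ G.Adj i j)) ∧ A.rank = r}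

/-- `G` is a frame graph in the `d`-dimensional inner product space over `𝕜`:
there is a spanning family (frame) `f` indexed by the vertices such that distinct
vertices are adjacent iff the corresponding vectors are non-orthogonal. -/
def IsFrameGraphIn (𝕜 : Type) [RCLike 𝕜] {V : Type} (G : SimpleGraph V) (d : ℕ) : Prop :=
  ∃ f : V → EuclideanSpace 𝕜 (Fin d),
    Submodule.span 𝕜 (Set.range f) = ⊤ ∧
    ∀ i j : V, i ≠ j → ((inner 𝕜 (f i) (f j) : 𝕜) ≠ 0 ↔ G.Adj i j)

/-- The strong product of two simple graphs. -/
def strongProd {α β : Type} (G : SimpleGraph α) (H : SimpleGraph β) :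
    SimpleGraph (α × β) where
  Adj x y := (x.1 = y.1 ∧ H.Adj x.2 y.2) ∨ (x.2 = y.2 ∧ G.Adj x.1 y.1) ∨
    (G.Adj x.1 y.1 ∧ H.Adj x.2 y.2)
  symm := by
    constructor
    rintro ⟨a, b⟩ ⟨c, d⟩ (⟨h1, h2⟩ | ⟨h1, h2⟩ | ⟨h1, h2⟩)
    · exact Or.inl ⟨h1.symm, h2.symm⟩
    · exact Or.inr (Or.inl ⟨h1.symm, h2.symm⟩)
    · exact Or.inr (Or.inr ⟨h1.symm, h2.symm⟩)
  loopless := by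
    constructor
    rintro ⟨a, b⟩ (⟨_, h⟩ | ⟨_, h⟩ | ⟨h, _⟩)
    · exact H.loopless.irrefl b h
    · exact G.loopless.irrefl a h
    · exact G.loopless.irrefl a h

/-- The join `G ∨ H` of two graphs with disjoint vertex sets. -/
def joinGraph {α β : Type} (G : SimpleGraph α) (H : SimpleGraph β) :
    SimpleGraph (α ⊕ β) where
  Adj x y := match x, y with
    | Sum.inl a, Sum.inl b => G.Adj a b
    | Sum.inr a, Sum.inr b => H.Adj a b
    | Sum.inl _, Sum.inr _ => True
    | Sum.inr _, Sum.inl _ => True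
  symm := by
    constructor
    rintro (a | a) (b | b) h
    · exact h.symm
    · trivial
    · trivial
    · exact h.symm
  loopless := by
    constructor
    rintro (a | a) h
    · exact G.loopless.irrefl a h
    · exact H.loopless.irrefl a h

/-- The vertex-sum `G · H` of `G` and `H`, obtained by identifying the vertex `a` of `G`
with the vertex `b` of `H` (and no other vertices or edges shared). -/
def vertexSum {α β : Type} (G : SimpleGraph α) (H : SimpleGraph β) (a : α) (b : β) :
    SimpleGraph (α ⊕ {y : β // y ≠ b}) where
  Adj x y := match x, y with
    | Sum.inl u, Sum.inl u' => G.Adj u u'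
    | Sum.inr v, Sum.inr v' => H.Adj v.1 v'.1
    | Sum.inl u, Sum.inr v => u = a ∧ H.Adj b v.1
    | Sum.inr v, Sum.inl u => u = a ∧ H.Adj b v.1
  symm := by
    constructor
    rintro (u | v) (u' | v') h
    · exact h.symm
    · exact h
    · exact h
    · exact h.symm
  loopless := by
    constructor
    rintro (u | v) h
    · exact G.loopless.irrefl u h
    · exact H.loopless.irrefl v.1 h

/-- The corona product `G ∘ H`: one copy of `G`, one copy of `H` for each vertex of `G`,
with every vertex of the `i`-th copy of `H` joined to the `i`-th vertex of `G`. -/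
def corona {α β : Type} (G : SimpleGraph α) (H : SimpleGraph β) :
    SimpleGraph (α ⊕ α × β) where
  Adj x y := match x, y with
    | Sum.inl u, Sum.inl u' => G.Adj u u'
    | Sum.inr p, Sum.inr q => p.1 = q.1 ∧ H.Adj p.2 q.2
    | Sum.inl u, Sum.inr p => u = p.1
    | Sum.inr p, Sum.inl u => u = p.1
  symm := by
    constructor
    rintro (u | p) (u' | q) h
    · exact h.symm
    · exact h
    · exact h
    · exact ⟨h.1.symm, h.2.symm⟩
  loopless := by
    constructor
    rintro (u | p) h
    · exact G.loopless.irrefl u h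
    · exact H.loopless.irrefl p.2 h.2

/-- `v : Fin m → V` is an OS-vertex set of `G`: the vertices are distinct, and for each `k`
there is `w` adjacent to `v k`, different from all `v l` with `l ≤ k`, and non-adjacent to
every `v l` (`l < k`) lying in the connected component of `v k` in the subgraph induced by
`{v 0, …, v k}`. -/
def IsOSSet {V : Type} (G : SimpleGraph V) {m : ℕ} (v : Fin m → V) : Prop :=
  Function.Injective v ∧
  ∀ k : Fin m, ∃ w : V,
    G.Adj (v k) w ∧
    (∀ l : Fin m, l ≤ k → w ≠ v l) ∧
    ∀ l : Fin m, (hl : l < k) →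
      (G.induce {x : V | ∃ l' : Fin m, l' ≤ k ∧ x = v l'}).Reachable
        ⟨v l, ⟨l, le_of_lt hl, rfl⟩⟩ ⟨v k, ⟨k, le_refl k, rfl⟩⟩ →
      ¬ G.Adj w (v l)

/-- The OS-number of `G`: the maximum cardinality of an OS-vertex set of `G`. -/
noncomputable def OSNumber {V : Type} (G : SimpleGraph V) : ℕ :=
  sSup {m : ℕ | ∃ v : Fin m → V, IsOSSet G v}

/-!
For `n' ≤ d ≤ n + m` take frames of `G` in `ℂ^a` and of `H` in `ℂ^b`, where `a = min d n` and
`b = max (d - n) m'`. As `a, b ≤ d ≤ a + b`, they can be placed isometrically in `ℂ^d` so that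
together they span. It remains to make every vector `x` of the first frame non-orthogonal to
every vector `w` of the second without changing either Gram matrix. If `⟪x, w⟫ = 0`, apply to
the second frame the unitary `c P + (1 - P)`, where `P` projects onto the line through `x + w`
and `|c| = 1`: `⟪x, w⟫` becomes nonzero for `c ≠ 1`, and each property to be kept (a
non-orthogonal pair, the spanning) fails only where an affine function of `c` that is nonzero at
`c = 1` vanishes, so all but finitely many `c` work. Each such rotation lowers the number of
orthogonal pairs. Conversely, a frame of `G ∨ H` restricts to one of `G` in a subspace.
By Gram matrices, `mr₊` is the least dimension of a frame.
-/

open Submodule Set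
open scoped Matrix

theorem span_range_comp {R M N ι : Type*} [Semiring R] [AddCommMonoid M] [AddCommMonoid N]
    [Module R M] [Module R N] (f : M →ₗ[R] N) (v : ι → M) :
    span R (range (f ∘ v)) = (span R (range v)).map f := by
  rw [range_comp, span_image]

section FrameGraph

variable {𝕜 : Type} [RCLike 𝕜] {V : Type}

theorem isFrameGraphIn_finrank_span (G : SimpleGraph V) {E : Type*} [NormedAddCommGroup E]
    [InnerProductSpace 𝕜 E] [FiniteDimensional 𝕜 E] (f : V → E)
    (hf : ∀ i j, i ≠ j → (inner 𝕜 (f i) (f j) ≠ 0 ↔ G.Adj i j)) :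
    IsFrameGraphIn 𝕜 G (Module.finrank 𝕜 (span 𝕜 (range f))) := by
  set W := span 𝕜 (range f)
  let g : V → W := fun i => ⟨f i, subset_span ⟨i, rfl⟩⟩
  have hg : span 𝕜 (range g) = ⊤ := by
    apply map_injective_of_injective W.injective_subtype
    rw [map_span, Submodule.map_top, range_subtype, ← range_comp]
    rfl
  let b := stdOrthonormalBasis 𝕜 W
  refine ⟨b.repr ∘ g, ?_, fun i j hij => by simpa [b.repr.inner_map_map] using hf i j hij⟩
  rw [range_comp, ← LinearIsometryEquiv.coe_toLinearEquiv, ← LinearEquiv.coe_toLinearMap,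
    span_image, hg, Submodule.map_top, LinearEquiv.range]

theorem IsFrameGraphIn.exists_le_comap {W : Type} {G : SimpleGraph V} {d : ℕ}
    (h : IsFrameGraphIn 𝕜 G d) {e : W → V} (he : Function.Injective e) :
    ∃ a ≤ d, IsFrameGraphIn 𝕜 (G.comap e) a := by
  obtain ⟨f, -, hf⟩ := h
  refine ⟨_, ?_, isFrameGraphIn_finrank_span _ (f ∘ e) fun i j hij => hf _ _ (he.ne hij)⟩
  simpa using (span 𝕜 (range (f ∘ e))).finrank_le

theorem IsFrameGraphIn.le_card [Fintype V] {G : SimpleGraph V} {d : ℕ}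
    (h : IsFrameGraphIn 𝕜 G d) : d ≤ Fintype.card V := by
  obtain ⟨f, hf, -⟩ := h
  have := finrank_range_le_card (R := 𝕜) f
  rwa [Set.finrank, hf, finrank_top, finrank_euclideanSpace_fin] at this

theorem inner_toLp_col_toLp_col {m : Type} [Fintype m] (B : Matrix m V 𝕜) (i j : V) :
    inner 𝕜 (WithLp.toLp 2 (B.col i)) (WithLp.toLp 2 (B.col j)) = (Bᴴ * B) i j := by
  simp [Matrix.mul_apply, PiLp.inner_apply, mul_comm]

theorem finrank_span_range_toLp_col {m : Type} [Fintype m] [Fintype V] (B : Matrix m V 𝕜) :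
    Module.finrank 𝕜 (span 𝕜 (range fun i => WithLp.toLp 2 (B.col i))) = (Bᴴ * B).rank := by
  rw [Matrix.rank_conjTranspose_mul_self, Matrix.rank_eq_finrank_span_cols,
    ← LinearEquiv.finrank_map_eq (WithLp.linearEquiv 2 𝕜 (m → 𝕜)).symm, ← span_image,
    ← range_comp]
  rfl

open scoped MatrixOrder in
theorem isFrameGraphIn_iff_exists_posSemidef [Fintype V] {G : SimpleGraph V} {d : ℕ} :
    IsFrameGraphIn 𝕜 G d ↔ ∃ A : Matrix V V 𝕜, A.PosSemidef ∧
      (∀ i j, i ≠ j → (A i j ≠ 0 ↔ G.Adj i j)) ∧ A.rank = d := by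
  constructor
  · rintro ⟨f, hspan, hf⟩
    let B : Matrix (Fin d) V 𝕜 := Matrix.of fun k i => f i k
    refine ⟨Bᴴ * B, Matrix.posSemidef_conjTranspose_mul_self B, fun i j hij => ?_, ?_⟩
    · rw [← inner_toLp_col_toLp_col]
      exact hf i j hij
    · rw [← finrank_span_range_toLp_col]
      change Module.finrank 𝕜 (span 𝕜 (range f)) = d
      rw [hspan, finrank_top, finrank_euclideanSpace_fin]
  · classical
    rintro ⟨A, hA, hpat, rfl⟩
    obtain ⟨B, rfl⟩ : ∃ B : Matrix V V 𝕜, A = Bᴴ * B :=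
      CStarAlgebra.nonneg_iff_eq_star_mul_self.mp hA.nonneg
    rw [← finrank_span_range_toLp_col]
    refine isFrameGraphIn_finrank_span G _ fun i j hij => ?_
    rw [inner_toLp_col_toLp_col]
    exact hpat i j hij

theorem mrPlus_eq_sInf [Fintype V] [DecidableEq V] (G : SimpleGraph V) :
    mrPlus 𝕜 G = sInf {d | IsFrameGraphIn 𝕜 G d} := by
  simp only [mrPlus, isFrameGraphIn_iff_exists_posSemidef]

theorem exists_isFrameGraphIn [Fintype V] (G : SimpleGraph V) :
    ∃ d, IsFrameGraphIn 𝕜 G d := by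
  classical
  let M := G.incMatrix 𝕜
  have hM : Mᴴ = Mᵀ := by
    ext e v
    simp [M, SimpleGraph.incMatrix_apply, Set.indicator_apply]
  refine ⟨_, isFrameGraphIn_iff_exists_posSemidef.mpr
    ⟨M * Mᴴ, Matrix.posSemidef_self_mul_conjTranspose M, fun i j hij => ?_, rfl⟩⟩
  rw [hM, SimpleGraph.incMatrix_mul_transpose]
  simp [hij]

theorem le_of_forall_isFrameGraphIn_iff [Fintype V] {G : SimpleGraph V} {lo hi : ℕ}
    (h : ∀ d, IsFrameGraphIn 𝕜 G d ↔ lo ≤ d ∧ d ≤ hi) : lo ≤ hi := by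
  obtain ⟨d, hd⟩ := exists_isFrameGraphIn (𝕜 := 𝕜) G
  exact ((h d).1 hd).1.trans ((h d).1 hd).2

theorem mrPlus_eq_of_forall_isFrameGraphIn_iff [Fintype V] [DecidableEq V] {G : SimpleGraph V}
    {lo hi : ℕ} (h : ∀ d, IsFrameGraphIn 𝕜 G d ↔ lo ≤ d ∧ d ≤ hi) : mrPlus 𝕜 G = lo := by
  rw [mrPlus_eq_sInf, show {d | IsFrameGraphIn 𝕜 G d} = Icc lo hi from Set.ext h,
    csInf_Icc (le_of_forall_isFrameGraphIn_iff h)]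

end FrameGraph

section PhaseRotation

variable {E : Type*} [NormedAddCommGroup E] [InnerProductSpace ℂ E]

noncomputable def phaseRotation (K : Submodule ℂ E) [K.HasOrthogonalProjection] (c : Circle) :
    E →ₗᵢ[ℂ] E :=
  LinearMap.isometryOfInner (LinearMap.id + ((c : ℂ) - 1) • K.starProjection.toLinearMap)
    fun v w => by
      have hP : ∀ v w : E, inner ℂ (K.starProjection v) (K.starProjection w) =
          inner ℂ v (K.starProjection w) := fun v w => by
        rw [inner_starProjection_left_eq_right,
          K.starProjection_eq_self_iff.mpr (K.starProjection_apply_mem w)]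
      have hc : (starRingEnd ℂ) c * c = 1 := by
        rw [Complex.conj_mul', Circle.norm_coe]; norm_num
      simp only [LinearMap.add_apply, LinearMap.id_apply, LinearMap.smul_apply,
        ContinuousLinearMap.coe_coe, inner_add_left, inner_add_right, inner_smul_left,
        inner_smul_right, hP, inner_starProjection_left_eq_right, map_sub, map_one]
      linear_combination inner ℂ v (K.starProjection w) * hc

variable (K : Submodule ℂ E) [K.HasOrthogonalProjection] (c : Circle)

theorem phaseRotation_apply (v : E) :
    phaseRotation K c v = v + ((c : ℂ) - 1) • K.starProjection v :=
  rfl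

theorem sup_le_sup_map_phaseRotation {X Z : Submodule ℂ E}
    (hK : K ≤ X ⊔ Z.map (phaseRotation K c).toLinearMap) :
    X ⊔ Z ≤ X ⊔ Z.map (phaseRotation K c).toLinearMap := by
  refine sup_le le_sup_left fun v hv => ?_
  have hv' : v = phaseRotation K c v - ((c : ℂ) - 1) • K.starProjection v := by
    rw [phaseRotation_apply, add_sub_cancel_right]
  rw [hv']
  exact sub_mem (mem_sup_right (mem_map_of_mem hv))
    (smul_mem _ _ (hK (K.starProjection_apply_mem v)))

end PhaseRotation

instance : Infinite Circle :=
  infinite_univ_iff.mp <| ((Icc_infinite zero_lt_one).image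
    (Circle.exp_injOn_Icc (by linarith [Real.pi_gt_three]))).mono (subset_univ _)

theorem subsingleton_setOf_add_sub_one_mul_eq_zero {α : ℂ} (hα : α ≠ 0) (β : ℂ) :
    {c : ℂ | α + (c - 1) * β = 0}.Subsingleton := by
  intro c₁ (h₁ : α + (c₁ - 1) * β = 0) c₂ (h₂ : α + (c₂ - 1) * β = 0)
  have hβ : β ≠ 0 := by rintro rfl; simp [hα] at h₁
  have : (c₁ - c₂) * β = 0 := by linear_combination h₁ - h₂
  simpa [sub_eq_zero, hβ] using this

theorem Circle.exists_ne_one_forall_add_sub_one_mul_ne_zero {ι : Type*} [Finite ι]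
    (α β : ι → ℂ) (hα : ∀ k, α k ≠ 0) :
    ∃ c : Circle, c ≠ 1 ∧ ∀ k, α k + ((c : ℂ) - 1) * β k ≠ 0 := by
  have hfin : (insert 1 (⋃ k, (↑) ⁻¹' {c : ℂ | α k + (c - 1) * β k = 0}) : Set Circle).Finite :=
    (finite_iUnion fun k => (subsingleton_setOf_add_sub_one_mul_eq_zero (hα k) (β k)).finite
      |>.preimage Circle.coe_injective.injOn).insert 1
  obtain ⟨c, hc⟩ := hfin.infinite_compl.nonempty
  simp only [mem_compl_iff, mem_insert_iff, mem_iUnion, not_or, not_exists] at hc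
  exact ⟨c, hc.1, hc.2⟩

section Genericity

variable {E : Type*} [NormedAddCommGroup E] [InnerProductSpace ℂ E]
  {ι κ : Type*} {x : ι → E}

/-- `V` rotates about the axis `x i₀ + z j₀`, with a phase avoiding the finitely many values at
which a non-orthogonal pair becomes orthogonal or `z j₀` leaves `span x ⊔ span (V ∘ z)`. -/
theorem exists_linearIsometry_inner_ne_zero_of_inner_eq_zero [Finite ι] [Finite κ] {i₀ : ι}
    {j₀ : κ} {z : κ → E} (hx : x i₀ ≠ 0) (hz : z j₀ ≠ 0) (h₀ : inner ℂ (x i₀) (z j₀) = 0) :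
    ∃ V : E →ₗᵢ[ℂ] E,
      span ℂ (range x) ⊔ span ℂ (range z) ≤ span ℂ (range x) ⊔ span ℂ (range (V ∘ z)) ∧
      inner ℂ (x i₀) (V (z j₀)) ≠ 0 ∧
      ∀ i j, inner ℂ (x i) (z j) ≠ 0 → inner ℂ (x i) (V (z j)) ≠ 0 := by
  set a := x i₀
  set w := z j₀
  set u := a + w
  set P := (ℂ ∙ u).starProjection
  have hau : inner ℂ a u = inner ℂ a a := by rw [inner_add_right, h₀, add_zero]
  have huw : inner ℂ u w = inner ℂ w w := by rw [inner_add_left, h₀, zero_add]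
  have hu : u ≠ 0 := fun h => hx (inner_self_eq_zero.mp (by rw [← hau, h, inner_zero_right]))
  set μ := inner ℂ u w / ((‖u‖ ^ 2 : ℝ) : ℂ)
  have hPw : P w = μ • u := starProjection_singleton ℂ w
  have hμ : μ ≠ 0 := div_ne_zero (huw ▸ inner_self_ne_zero.mpr hz) (by simp [hu])
  have hinner : ∀ (c : Circle) (y v : E),
      inner ℂ y (phaseRotation (ℂ ∙ u) c v) = inner ℂ y v + ((c : ℂ) - 1) * inner ℂ y (P v) :=
    fun c y v => by rw [phaseRotation_apply, inner_add_right, inner_smul_right]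
  obtain ⟨c, hc1, hc⟩ := Circle.exists_ne_one_forall_add_sub_one_mul_ne_zero
    (ι := Option {p : ι × κ // inner ℂ (x p.1) (z p.2) ≠ 0})
    (fun k => k.elim 1 fun p => inner ℂ (x p.1.1) (z p.1.2))
    (fun k => k.elim μ fun p => inner ℂ (x p.1.1) (P (z p.1.2)))
    (by rintro (_ | p); exacts [one_ne_zero, p.2])
  set V := phaseRotation (ℂ ∙ u) c
  refine ⟨V, ?_, ?_, fun i j hij => by rw [hinner]; exact hc (some ⟨(i, j), hij⟩)⟩
  · rw [show range (V ∘ z) = range (V.toLinearMap ∘ z) from rfl, span_range_comp]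
    refine sup_le_sup_map_phaseRotation _ _ ((span_singleton_le_iff_mem _ _).mpr ?_)
    set S := span ℂ (range x) ⊔ (span ℂ (range z)).map V.toLinearMap
    have haS : a ∈ S := mem_sup_left (subset_span ⟨i₀, rfl⟩)
    -- `V w = w + (c - 1) μ (a + w)`, so `S` contains a nonzero multiple of `w`
    have hwS : (1 + ((c : ℂ) - 1) * μ) • w ∈ S := by
      have hVw : V w ∈ S := mem_sup_right (mem_map_of_mem (subset_span ⟨j₀, rfl⟩))
      convert sub_mem hVw (smul_mem S (((c : ℂ) - 1) * μ) haS) using 1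
      rw [phaseRotation_apply]
      change _ = w + ((c : ℂ) - 1) • P w - _
      rw [hPw]
      module
    exact add_mem haS ((smul_mem_iff _ (hc none)).mp hwS)
  · rw [hinner, h₀, zero_add, hPw, inner_smul_right, hau]
    refine mul_ne_zero (sub_ne_zero.mpr ?_) (mul_ne_zero hμ (inner_self_ne_zero.mpr hx))
    simpa using Circle.coe_injective.ne hc1

theorem exists_linearIsometry_forall_inner_ne_zero [Finite ι] [Finite κ] {z : κ → E}
    (hx : ∀ i, x i ≠ 0) (hz : ∀ j, z j ≠ 0) :
    ∃ U : E →ₗᵢ[ℂ] E,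
      span ℂ (range x) ⊔ span ℂ (range z) ≤ span ℂ (range x) ⊔ span ℂ (range (U ∘ z)) ∧
      ∀ i j, inner ℂ (x i) (U (z j)) ≠ 0 := by
  induction hn : {p : ι × κ | inner ℂ (x p.1) (z p.2) = 0}.ncard using Nat.strong_induction_on
    generalizing z with | _ n ih =>
  by_cases hgood : ∀ i j, inner ℂ (x i) (z j) ≠ 0
  · exact ⟨LinearIsometry.id, le_rfl, hgood⟩
  obtain ⟨i₀, j₀, h₀⟩ : ∃ i j, inner ℂ (x i) (z j) = 0 := by simpa using hgood
  obtain ⟨V, hVspan, hV₀, hVgood⟩ :=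
    exists_linearIsometry_inner_ne_zero_of_inner_eq_zero (hx i₀) (hz j₀) h₀
  have hlt : {p : ι × κ | inner ℂ (x p.1) (V (z p.2)) = 0}.ncard < n := by
    refine hn ▸ ncard_lt_ncard ((ssubset_iff_of_subset fun p hp => ?_).mpr ⟨(i₀, j₀), h₀, hV₀⟩)
    by_contra h
    exact hVgood p.1 p.2 h hp
  obtain ⟨U, hUspan, hU⟩ := ih _ hlt (z := V ∘ z)
    (fun j => (map_ne_zero_iff V V.injective).mpr (hz j)) rfl
  exact ⟨U.comp V, hVspan.trans hUspan, hU⟩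

end Genericity

section Join

theorem exists_linearIsometry_range_eq_span_single {𝕜 : Type*} [RCLike 𝕜] {ι κ : Type*}
    [Fintype ι] [Fintype κ] [DecidableEq ι] [DecidableEq κ] (e : ι ↪ κ) :
    ∃ U : EuclideanSpace 𝕜 ι →ₗᵢ[𝕜] EuclideanSpace 𝕜 κ,
      LinearMap.range U.toLinearMap =
        span 𝕜 (range fun i => EuclideanSpace.single (e i) (1 : 𝕜)) := by
  let b := EuclideanSpace.basisFun ι 𝕜
  let f := b.toBasis.constr (M' := EuclideanSpace 𝕜 κ) 𝕜 fun i => EuclideanSpace.single (e i) 1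
  have hf : Orthonormal 𝕜 (f ∘ b.toBasis) := by
    convert EuclideanSpace.orthonormal_single.comp e e.injective using 1
    funext i
    exact b.toBasis.constr_basis 𝕜 _ i
  refine ⟨f.isometryOfOrthonormal ?_ hf, b.toBasis.constr_range 𝕜⟩
  rw [OrthonormalBasis.coe_toBasis]
  exact b.orthonormal

theorem exists_linearIsometry_sup_range_eq_top {𝕜 : Type*} [RCLike 𝕜] {a b d : ℕ}
    (ha : a ≤ d) (hb : b ≤ d) (hd : d ≤ a + b) :
    ∃ (U₁ : EuclideanSpace 𝕜 (Fin a) →ₗᵢ[𝕜] EuclideanSpace 𝕜 (Fin d))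
      (U₂ : EuclideanSpace 𝕜 (Fin b) →ₗᵢ[𝕜] EuclideanSpace 𝕜 (Fin d)),
      LinearMap.range U₁.toLinearMap ⊔ LinearMap.range U₂.toLinearMap = ⊤ := by
  obtain ⟨U₁, h₁⟩ := exists_linearIsometry_range_eq_span_single (𝕜 := 𝕜) (Fin.castLEEmb ha)
  obtain ⟨U₂, h₂⟩ := exists_linearIsometry_range_eq_span_single (𝕜 := 𝕜)
    ((Fin.natAddEmb (d - b)).trans (Fin.castLEEmb (n := d - b + b) (m := d) (by omega)))
  refine ⟨U₁, U₂, eq_top_iff.mpr ?_⟩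
  rw [h₁, h₂, ← span_union, ← (EuclideanSpace.basisFun (Fin d) 𝕜).toBasis.span_eq]
  refine span_mono ?_
  rintro _ ⟨k, rfl⟩
  by_cases hk : k.1 < a
  · exact Or.inl ⟨⟨k, hk⟩, by simp⟩
  · exact Or.inr ⟨⟨k - (d - b), by omega⟩, by
      simp only [OrthonormalBasis.coe_toBasis, EuclideanSpace.basisFun_apply]
      congr 1
      exact Fin.ext (show d - b + (k - (d - b)) = k by omega)⟩

variable {α β : Type} {G : SimpleGraph α} {H : SimpleGraph β}

theorem SimpleGraph.Adj.ne_zero_of_inner_ne_zero_iff {𝕜 : Type*} [RCLike 𝕜] {E : Type*}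
    [NormedAddCommGroup E] [InnerProductSpace 𝕜 E] {f : α → E} {v w : α} (h : G.Adj v w)
    (hf : ∀ i j, i ≠ j → (inner 𝕜 (f i) (f j) ≠ 0 ↔ G.Adj i j)) : f v ≠ 0 :=
  fun h0 => (hf v w h.ne).mpr h (by rw [h0, inner_zero_left])

theorem IsFrameGraphIn.joinGraph [Finite α] [Finite β] {a b d : ℕ}
    (hG : IsFrameGraphIn ℂ G a) (hH : IsFrameGraphIn ℂ H b) (hG' : ∀ v, ∃ w, G.Adj v w)
    (hH' : ∀ v, ∃ w, H.Adj v w) (ha : a ≤ d) (hb : b ≤ d) (hd : d ≤ a + b) :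
    IsFrameGraphIn ℂ (joinGraph G H) d := by
  obtain ⟨f, hfspan, hf⟩ := hG
  obtain ⟨g, hgspan, hg⟩ := hH
  obtain ⟨U₁, U₂, hU₁₂⟩ := exists_linearIsometry_sup_range_eq_top (𝕜 := ℂ) ha hb hd
  have hx (i : α) : U₁ (f i) ≠ 0 := by
    obtain ⟨_, hw⟩ := hG' i
    exact (map_ne_zero_iff _ U₁.injective).mpr (hw.ne_zero_of_inner_ne_zero_iff hf)
  have hz (j : β) : U₂ (g j) ≠ 0 := by
    obtain ⟨_, hw⟩ := hH' j
    exact (map_ne_zero_iff _ U₂.injective).mpr (hw.ne_zero_of_inner_ne_zero_iff hg)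
  obtain ⟨U, hUspan, hU⟩ := exists_linearIsometry_forall_inner_ne_zero (x := U₁ ∘ f) hx hz
  have hspan : span ℂ (range (U₁ ∘ f)) ⊔ span ℂ (range (U₂ ∘ g)) = ⊤ := by
    rw [← hU₁₂, ← Submodule.map_top, ← Submodule.map_top, ← hfspan, ← hgspan, ← span_range_comp,
      ← span_range_comp]
    rfl
  refine ⟨Sum.elim (U₁ ∘ f) (U ∘ U₂ ∘ g), ?_, ?_⟩
  · rw [Sum.elim_range, span_union]
    exact top_unique (hspan ▸ hUspan)
  · rintro (i | i) (j | j) hij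
    · simp only [Sum.elim_inl, Function.comp_apply, LinearIsometry.inner_map_map]
      exact hf i j (ne_of_apply_ne Sum.inl hij)
    · exact iff_of_true (hU i j) trivial
    · refine iff_of_true ?_ trivial
      rw [← inner_conj_symm]
      exact (map_ne_zero _).mpr (hU j i)
    · simp only [Sum.elim_inr, Function.comp_apply, LinearIsometry.inner_map_map]
      exact hg i j (ne_of_apply_ne Sum.inr hij)

end Join

/-- the join of connected graphs is a frame graph in a complex space of
dimension `d` exactly when `n' ≤ d ≤ n + m`; equivalently
`mr₊^ℂ(G ∨ H) = max (mr₊^ℂ(G)) (mr₊^ℂ(H))`. -/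
theorem isFrameGraphIn_joinGraph (n m n' m' : ℕ) (hn : 2 ≤ n) (hm : 2 ≤ m) (hnm : m' ≤ n')
    (G : SimpleGraph (Fin n)) (H : SimpleGraph (Fin m))
    (hGc : G.Connected) (hHc : H.Connected)
    (hG : ∀ d : ℕ, IsFrameGraphIn ℂ G d ↔ n' ≤ d ∧ d ≤ n)
    (hH : ∀ d : ℕ, IsFrameGraphIn ℂ H d ↔ m' ≤ d ∧ d ≤ m) :
    (∀ d : ℕ, IsFrameGraphIn ℂ (joinGraph G H) d ↔ n' ≤ d ∧ d ≤ n + m) ∧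
    mrPlus ℂ (joinGraph G H) = max (mrPlus ℂ G) (mrPlus ℂ H) := by
  have hn' := le_of_forall_isFrameGraphIn_iff hG
  have hm' := le_of_forall_isFrameGraphIn_iff hH
  have : Nontrivial (Fin n) := Fin.nontrivial_iff_two_le.mpr hn
  have : Nontrivial (Fin m) := Fin.nontrivial_iff_two_le.mpr hm
  have hjoin (d : ℕ) : IsFrameGraphIn ℂ (joinGraph G H) d ↔ n' ≤ d ∧ d ≤ n + m := by
    refine ⟨fun h => ⟨?_, by simpa using h.le_card⟩, fun ⟨hd₁, hd₂⟩ => ?_⟩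
    · obtain ⟨a, had, ha⟩ := h.exists_le_comap Sum.inl_injective
      have := (hG a).1 ha
      omega
    · exact ((hG (min d n)).2 ⟨by omega, by omega⟩).joinGraph
        ((hH (max (d - n) m')).2 ⟨by omega, by omega⟩)
        hGc.preconnected.exists_adj_of_nontrivial hHc.preconnected.exists_adj_of_nontrivial
        (by omega) (by omega) (by omega)
  refine ⟨hjoin, ?_⟩
  rw [mrPlus_eq_of_forall_isFrameGraphIn_iff hG, mrPlus_eq_of_forall_isFrameGraphIn_iff hH,
    mrPlus_eq_of_forall_isFrameGraphIn_iff hjoin]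
  omega
end

section
/- Let T be a tree of order m ≥ 2 and T' a tree of order m' ≥ 2. Then mr_+^R(T ∘ T') = mr_+^C(T ∘ T') = mm' − 1, where T ∘ T' is the corona product of T with T'. -/
open scoped ComplexOrder

/-! A positive semidefinite matrix with the pattern of `G` is the Gram matrix of a faithful
orthogonal representation of `G` (vectors that are non-orthogonal exactly along the edges), and
its rank is the dimension those vectors span. For a tree, projecting the other vectors away from
the vector of a leaf gives a faithful representation of the remaining tree orthogonal to it, so a
tree on `n` vertices needs dimension `n - 1`. In `T ∘ T'` the `m` copies of `T'` span mutually
orthogonal subspaces of dimension at least `m' - 1` each, and the components of the apex vectors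
orthogonal to their own copies represent `T` orthogonally to all of them: the rank is at least
`m (m' - 1) + (m - 1) = m m' - 1`.

Conversely, the edges of `T` together with the triangles formed by an apex and an edge of its
copy of `T'` are `m m' - 1` cliques covering every edge of `T ∘ T'` (here `m' ≥ 2` is needed),
and the sum of the rank-one matrices of their indicator vectors has the pattern of `T ∘ T'`. -/

open Module Submodule Set Matrix

section LinearAlgebra

theorem iSupIndep.finrank_iSup {K M ι : Type*} [DivisionRing K] [AddCommGroup M] [Module K M]
    [Fintype ι] {V : ι → Submodule K M} [∀ i, FiniteDimensional K (V i)] (hV : iSupIndep V) :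
    finrank K ↥(⨆ i, V i) = ∑ i, finrank K (V i) := by
  classical
  rw [iSup_eq_range_dfinsupp_lsum, LinearMap.finrank_range_of_inj hV.dfinsupp_lsum_injective]
  exact Module.finrank_directSum K fun i => V i

variable {𝕜 E : Type*} [RCLike 𝕜] [NormedAddCommGroup E] [InnerProductSpace 𝕜 E]

theorem Submodule.IsOrtho.finrank_add_finrank_le [FiniteDimensional 𝕜 E]
    {U V W : Submodule 𝕜 E} (h : U ⟂ V) (hW : U ⊔ V ≤ W) :
    finrank 𝕜 U + finrank 𝕜 V ≤ finrank 𝕜 W := by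
  rw [← finrank_sup_add_finrank_inf_eq, h.disjoint.eq_bot, finrank_bot, add_zero]
  exact Submodule.finrank_mono hW

theorem Submodule.sum_finrank_le_of_pairwise_isOrtho [FiniteDimensional 𝕜 E] {ι : Type*}
    [Fintype ι] {V : ι → Submodule 𝕜 E} (hV : Pairwise fun i j => V i ⟂ V j)
    {W : Submodule 𝕜 E} (hW : ∀ i, V i ≤ W) :
    ∑ i, finrank 𝕜 (V i) ≤ finrank 𝕜 W := by
  have hind : iSupIndep V := (orthogonalFamily_iff_pairwise.mpr hV).independent
  rw [← hind.finrank_iSup]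
  exact Submodule.finrank_mono (iSup_le hW)

theorem Submodule.inner_starProjection_starProjection_of_mem_left (K : Submodule 𝕜 E)
    [K.HasOrthogonalProjection] {x : E} (hx : x ∈ K) (y : E) :
    inner 𝕜 (K.starProjection x) (K.starProjection y) = inner 𝕜 x y := by
  rw [starProjection_eq_self_iff.mpr hx, ← inner_starProjection_left_eq_right,
    starProjection_eq_self_iff.mpr hx]

theorem Submodule.inner_starProjection_starProjection_of_mem_right (K : Submodule 𝕜 E)
    [K.HasOrthogonalProjection] (x : E) {y : E} (hy : y ∈ K) :
    inner 𝕜 (K.starProjection x) (K.starProjection y) = inner 𝕜 x y := by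
  rw [starProjection_eq_self_iff.mpr hy, inner_starProjection_left_eq_right,
    starProjection_eq_self_iff.mpr hy]

theorem Matrix.PosSemidef.exists_gram_eq {n : Type*} [Fintype n] {A : Matrix n n 𝕜}
    (hA : A.PosSemidef) :
    ∃ v : n → EuclideanSpace 𝕜 n,
      gram 𝕜 v = A ∧ A.rank = finrank 𝕜 (span 𝕜 (range v)) := by
  classical
  obtain ⟨B, rfl⟩ : ∃ B : Matrix n n 𝕜, A = star B * B := by
    open scoped MatrixOrder in
    exact CStarAlgebra.nonneg_iff_eq_star_mul_self.mp hA.nonneg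
  refine ⟨fun j => WithLp.toLp 2 (B.col j), ?_, ?_⟩
  · ext i j
    simp [mul_apply, PiLp.inner_apply, mul_comm]
  · have hrange : range (fun j => WithLp.toLp 2 (B.col j)) =
        (WithLp.linearEquiv 2 𝕜 (n → 𝕜)).symm '' range B.col := range_comp _ _
    rw [star_eq_conjTranspose, rank_conjTranspose_mul_self, rank_eq_finrank_span_cols, hrange,
      ← LinearEquiv.coe_coe, ← map_span, LinearEquiv.finrank_map_eq]

end LinearAlgebra

namespace SimpleGraph

def IsFaithfulOrthRep {V : Type*} (G : SimpleGraph V) (𝕜 : Type*) {E : Type*} [Zero 𝕜]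
    [Inner 𝕜 E] (g : V → E) : Prop :=
  ∀ ⦃i j⦄, i ≠ j → (inner 𝕜 (g i) (g j) ≠ 0 ↔ G.Adj i j)

namespace IsFaithfulOrthRep

variable {𝕜 E V W : Type*} [RCLike 𝕜] [NormedAddCommGroup E] [InnerProductSpace 𝕜 E]
  {G : SimpleGraph V} {g : V → E}

theorem inner_eq_zero (hg : G.IsFaithfulOrthRep 𝕜 g) {i j : V} (hij : i ≠ j)
    (hadj : ¬ G.Adj i j) : inner 𝕜 (g i) (g j) = 0 :=
  not_not.mp (mt (hg hij).mp hadj)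

theorem comp (hg : G.IsFaithfulOrthRep 𝕜 g) {H : SimpleGraph W} (f : H ↪g G) :
    H.IsFaithfulOrthRep 𝕜 (g ∘ f) :=
  fun _ _ hij => (hg (f.injective.ne hij)).trans f.map_adj_iff

theorem of_inner_eq (hg : G.IsFaithfulOrthRep 𝕜 g) {g' : V → E}
    (h : ∀ ⦃i j⦄, i ≠ j → inner 𝕜 (g' i) (g' j) = inner 𝕜 (g i) (g j)) :
    G.IsFaithfulOrthRep 𝕜 g' :=
  fun _ _ hij => h hij ▸ hg hij

theorem card_sub_one_le_finrank_span_of_isTree [FiniteDimensional 𝕜 E] [Finite V]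
    (hG : G.IsTree) (hg : G.IsFaithfulOrthRep 𝕜 g) :
    Nat.card V - 1 ≤ finrank 𝕜 (span 𝕜 (range g)) := by
  induction V using Finite.induction_subsingleton_or_nontrivial with
  | hbase V =>
    have := Finite.card_le_one_iff_subsingleton.mpr ‹Subsingleton V›
    omega
  | hstep V ih =>
    classical
    have := Fintype.ofFinite V
    obtain ⟨ℓ, hℓ⟩ := hG.exists_vert_degree_one_of_nontrivial
    obtain ⟨p, hℓp, hp⟩ := degree_eq_one_iff_existsUnique_adj.mp hℓ
    have hcard : Nat.card ({ℓ}ᶜ : Set V) = Nat.card V - 1 := by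
      rw [Nat.card_coe_set_eq, compl_eq_univ_sdiff, ncard_sdiff_singleton_of_mem (mem_univ ℓ),
        ncard_univ]
    set s : Set V := {ℓ}ᶜ
    have hs : (G.induce s).IsTree :=
      ⟨hG.connected.induce_compl_singleton_of_degree_eq_one hℓ, hG.isAcyclic.induce s⟩
    set K := (𝕜 ∙ g ℓ)ᗮ
    -- Only the neighbour `p` of the leaf can have its vector moved by the projection onto `K`,
    -- so every inner product between distinct vertices of `s` survives.
    have hmem : ∀ v : s, ¬ G.Adj ℓ v → g v ∈ K := fun v hv =>
      mem_orthogonal_singleton_iff_inner_right.mpr (hg.inner_eq_zero (Ne.symm v.2) hv)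
    have hg' : (G.induce s).IsFaithfulOrthRep 𝕜 (fun v : s => K.starProjection (g v)) := by
      refine (hg.comp (Embedding.induce s)).of_inner_eq fun v w hvw => ?_
      by_cases hv : G.Adj ℓ v
      · have hw : ¬ G.Adj ℓ w := fun hw => hvw (Subtype.ext ((hp _ hv).trans (hp _ hw).symm))
        exact K.inner_starProjection_starProjection_of_mem_right _ (hmem w hw)
      · exact K.inner_starProjection_starProjection_of_mem_left (hmem v hv) _
    have hgℓ : g ℓ ≠ 0 := fun h => (hg hℓp.ne).mpr hℓp (by simp [h])
    have hV := Finite.one_lt_card_iff_nontrivial.mpr ‹Nontrivial V›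
    have hℓg : (𝕜 ∙ g ℓ) ≤ span 𝕜 (range g) :=
      (span_singleton_le_iff_mem _ _).mpr (subset_span (mem_range_self ℓ))
    calc Nat.card V - 1 = (Nat.card s - 1) + finrank 𝕜 (𝕜 ∙ g ℓ) := by
          rw [finrank_span_singleton hgℓ]; omega
      _ ≤ finrank 𝕜 (span 𝕜 (range fun v : s => K.starProjection (g v))) +
          finrank 𝕜 (𝕜 ∙ g ℓ) := by
          gcongr; exact ih s (by omega) hs hg'
      _ ≤ finrank 𝕜 (span 𝕜 (range g)) := by
          refine IsOrtho.finrank_add_finrank_le ?_ (sup_le ?_ hℓg)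
          · exact (isOrtho_orthogonal_left _).mono_left
              (span_le.mpr (range_subset_iff.mpr fun v => starProjection_apply_mem K _))
          · refine span_le.mpr (range_subset_iff.mpr fun v => ?_)
            rw [starProjection_orthogonal_val]
            exact sub_mem (subset_span (mem_range_self _)) (hℓg (starProjection_apply_mem _ _))

end IsFaithfulOrthRep

end SimpleGraph

namespace corona

variable {α β : Type} {G : SimpleGraph α} {H : SimpleGraph β}

@[simp] theorem adj_inl_inl {u v : α} : (corona G H).Adj (.inl u) (.inl v) ↔ G.Adj u v := .rfl

@[simp] theorem adj_inr_inr {p q : α × β} :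
    (corona G H).Adj (.inr p) (.inr q) ↔ p.1 = q.1 ∧ H.Adj p.2 q.2 := .rfl

@[simp] theorem adj_inl_inr {u : α} {p : α × β} :
    (corona G H).Adj (.inl u) (.inr p) ↔ u = p.1 := .rfl

@[simp] theorem adj_inr_inl {u : α} {p : α × β} :
    (corona G H).Adj (.inr p) (.inl u) ↔ u = p.1 := .rfl

variable (G H)

def embLeft : G ↪g corona G H where
  toFun := .inl
  inj' := Sum.inl_injective
  map_rel_iff' := adj_inl_inl

@[simps]
def embRight (i : α) : H ↪g corona G H where
  toFun j := .inr (i, j)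
  inj' := Sum.inr_injective.comp (Prod.mk_right_injective i)
  map_rel_iff' := and_iff_right rfl

def cliqueCover : G.edgeSet ⊕ α × H.edgeSet → Set (α ⊕ α × β)
  | .inl e => {x | ∃ a ∈ (e : Sym2 α), x = .inl a}
  | .inr (i, e) => {x | x = .inl i ∨ ∃ b ∈ (e : Sym2 β), x = .inr (i, b)}

variable {G H}

theorem isClique_cliqueCover (d : G.edgeSet ⊕ α × H.edgeSet) :
    (corona G H).IsClique (cliqueCover G H d) := by
  rcases d with ⟨e, he⟩ | ⟨i, e, he⟩
  · rintro _ ⟨a, ha, rfl⟩ _ ⟨b, hb, rfl⟩ hab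
    have hab : a ≠ b := fun h => hab (congrArg _ h)
    obtain rfl := (Sym2.mem_and_mem_iff hab).mp ⟨(ha : a ∈ e), (hb : b ∈ e)⟩
    exact he
  · rintro _ (rfl | ⟨a, ha, rfl⟩) _ (rfl | ⟨b, hb, rfl⟩) hab
    · exact absurd rfl hab
    · exact adj_inl_inr.mpr rfl
    · exact adj_inr_inl.mpr rfl
    · have hab : a ≠ b := fun h => hab (by rw [h])
      obtain rfl := (Sym2.mem_and_mem_iff hab).mp ⟨(ha : a ∈ e), (hb : b ∈ e)⟩
      exact adj_inr_inr.mpr ⟨rfl, he⟩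

theorem exists_mem_cliqueCover (hH : ∀ j, ∃ k, H.Adj j k) {x y : α ⊕ α × β}
    (hxy : (corona G H).Adj x y) : ∃ d, x ∈ cliqueCover G H d ∧ y ∈ cliqueCover G H d := by
  rcases x with a | ⟨i, a⟩ <;> rcases y with b | ⟨k, b⟩
  · exact ⟨.inl ⟨s(a, b), hxy⟩, ⟨a, Sym2.mem_mk_left a b, rfl⟩,
      ⟨b, Sym2.mem_mk_right a b, rfl⟩⟩
  · obtain rfl : a = k := hxy
    obtain ⟨c, hc⟩ := hH b
    exact ⟨.inr (a, ⟨s(b, c), hc⟩), .inl rfl, .inr ⟨b, Sym2.mem_mk_left b c, rfl⟩⟩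
  · obtain rfl : b = i := hxy
    obtain ⟨c, hc⟩ := hH a
    exact ⟨.inr (b, ⟨s(a, c), hc⟩), .inr ⟨a, Sym2.mem_mk_left a c, rfl⟩, .inl rfl⟩
  · obtain ⟨rfl, hab⟩ : i = k ∧ H.Adj a b := hxy
    exact ⟨.inr (i, ⟨s(a, b), hab⟩), .inr ⟨a, Sym2.mem_mk_left a b, rfl⟩,
      .inr ⟨b, Sym2.mem_mk_right a b, rfl⟩⟩

end corona

namespace SimpleGraph.IsFaithfulOrthRep

variable {𝕜 E : Type*} [RCLike 𝕜] [NormedAddCommGroup E] [InnerProductSpace 𝕜 E]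
  [FiniteDimensional 𝕜 E]

theorem le_finrank_span_corona {α β : Type} [Fintype α] {G : SimpleGraph α} {H : SimpleGraph β}
    {r s : ℕ}
    (hG : ∀ f : α → E, G.IsFaithfulOrthRep 𝕜 f → r ≤ finrank 𝕜 (span 𝕜 (range f)))
    (hH : ∀ f : β → E, H.IsFaithfulOrthRep 𝕜 f → s ≤ finrank 𝕜 (span 𝕜 (range f)))
    {g : α ⊕ α × β → E} (hg : (corona G H).IsFaithfulOrthRep 𝕜 g) :
    r + Fintype.card α * s ≤ finrank 𝕜 (span 𝕜 (range g)) := by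
  set Y : α → Submodule 𝕜 E := fun i => span 𝕜 (range (g ∘ corona.embRight G H i))
  have hYY : Pairwise fun i k => Y i ⟂ Y k := fun i k hik =>
    isOrtho_span.mpr <| by
      rintro _ ⟨j, rfl⟩ _ ⟨j', rfl⟩
      exact hg.inner_eq_zero (by simp [hik]) (by simp [hik])
  have hgY : ∀ i k, i ≠ k → g (.inl i) ∈ (Y k)ᗮ := fun i k hik =>
    have : (𝕜 ∙ g (.inl i)) ⟂ Y k := isOrtho_span.mpr <| by
      rintro _ rfl _ ⟨j, rfl⟩
      exact hg.inner_eq_zero (by simp) (by simp [hik])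
    this (mem_span_singleton_self _)
  have hYg : ∀ i, Y i ≤ span 𝕜 (range g) := fun i => span_mono (range_comp_subset_range _ _)
  set h : α → E := fun i => (Y i)ᗮ.starProjection (g (.inl i))
  have hh_eq : ∀ i, h i = g (.inl i) - (Y i).starProjection (g (.inl i)) := fun i =>
    starProjection_orthogonal_val _
  have hhY : ∀ i k, h i ∈ (Y k)ᗮ := by
    intro i k
    by_cases hik : i = k
    · subst hik; exact starProjection_apply_mem _ _
    · rw [hh_eq]
      exact sub_mem (hgY i k hik) ((hYY hik) (starProjection_apply_mem _ _))
  have hh : G.IsFaithfulOrthRep 𝕜 h := by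
    refine (hg.comp (corona.embLeft G H)).of_inner_eq fun i j hij => ?_
    calc inner 𝕜 (h i) (h j) = inner 𝕜 (g (.inl i)) (h j) := by
          rw [hh_eq i, inner_sub_left,
            inner_right_of_mem_orthogonal (starProjection_apply_mem _ _) (hhY j i), sub_zero]
      _ = inner 𝕜 (g (.inl i)) (g (.inl j)) := by
          rw [hh_eq j, inner_sub_right,
            inner_left_of_mem_orthogonal (starProjection_apply_mem _ _) (hgY i j hij), sub_zero]
  set F : Option α → Submodule 𝕜 E := fun o => o.elim (span 𝕜 (range h)) Y
  have hhF : ∀ k, span 𝕜 (range h) ⟂ Y k := fun k =>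
    isOrtho_iff_le.mpr (span_le.mpr (range_subset_iff.mpr fun i => hhY i k))
  have hF : Pairwise fun o o' => F o ⟂ F o' := by
    rintro (_ | i) (_ | k) hne
    · exact absurd rfl hne
    · exact hhF k
    · exact (hhF i).symm
    · exact hYY fun hik => hne (congrArg some hik)
  have hFle : ∀ o, F o ≤ span 𝕜 (range g) := by
    rintro (_ | i)
    · refine span_le.mpr (range_subset_iff.mpr fun i => ?_)
      rw [hh_eq]
      exact sub_mem (subset_span (mem_range_self _)) (hYg i (starProjection_apply_mem _ _))
    · exact hYg i
  calc r + Fintype.card α * s ≤ finrank 𝕜 (F none) + ∑ i, finrank 𝕜 (F (some i)) := by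
        gcongr
        · exact hG h hh
        · exact Finset.card_nsmul_le_sum _ _ _ fun i _ => hH _ (hg.comp (corona.embRight G H i))
    _ = ∑ o, finrank 𝕜 (F o) := (Fintype.sum_option fun o => finrank 𝕜 (F o)).symm
    _ ≤ _ := sum_finrank_le_of_pairwise_isOrtho hF hFle

end SimpleGraph.IsFaithfulOrthRep

theorem SimpleGraph.exists_posSemidef_rank_le_of_cliqueCover {𝕜 V D : Type*} [RCLike 𝕜]
    [Fintype V] [Finite D] {G : SimpleGraph V} (C : D → Set V) (hC : ∀ d, G.IsClique (C d))
    (hcover : ∀ ⦃x y⦄, G.Adj x y → ∃ d, x ∈ C d ∧ y ∈ C d) :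
    ∃ A : Matrix V V 𝕜, A.PosSemidef ∧ (∀ i j, i ≠ j → (A i j ≠ 0 ↔ G.Adj i j)) ∧
      A.rank ≤ Nat.card D := by
  classical
  have := Fintype.ofFinite D
  let B : Matrix D V 𝕜 := of fun d v => if v ∈ C d then 1 else 0
  refine ⟨Bᴴ * B, posSemidef_conjTranspose_mul_self B, fun x y hxy => ?_, ?_⟩
  · have hB : (Bᴴ * B) x y = (Finset.univ.filter fun d => x ∈ C d ∧ y ∈ C d).card := by
      simp only [mul_apply, B, conjTranspose_apply, of_apply, Finset.card_filter, Nat.cast_sum]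
      refine Finset.sum_congr rfl fun d _ => ?_
      split_ifs <;> simp_all
    rw [hB, Nat.cast_ne_zero, Finset.card_ne_zero, Finset.filter_nonempty_iff]
    simp only [Finset.mem_univ, true_and]
    exact ⟨fun ⟨d, hx, hy⟩ => hC d hx hy hxy, fun h => hcover h⟩
  · rw [rank_conjTranspose_mul_self, Nat.card_eq_fintype_card]
    exact rank_le_card_height B

section mrPlus

variable {𝕜 : Type} [RCLike 𝕜]

theorem mrPlus_le_rank {V : Type} [Fintype V] [DecidableEq V] {G : SimpleGraph V}
    {A : Matrix V V 𝕜} (hA : A.PosSemidef)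
    (hAG : ∀ i j, i ≠ j → (A i j ≠ 0 ↔ G.Adj i j)) :
    mrPlus 𝕜 G ≤ A.rank :=
  Nat.sInf_le ⟨A, hA, hAG, rfl⟩

theorem le_mrPlus {V : Type} [Fintype V] [DecidableEq V] {G : SimpleGraph V} {r : ℕ}
    (hG : ∃ A : Matrix V V 𝕜, A.PosSemidef ∧
      ∀ i j, i ≠ j → (A i j ≠ 0 ↔ G.Adj i j))
    (hr : ∀ v : V → EuclideanSpace 𝕜 V, G.IsFaithfulOrthRep 𝕜 v →
      r ≤ finrank 𝕜 (span 𝕜 (range v))) :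
    r ≤ mrPlus 𝕜 G := by
  obtain ⟨A, hA, hAG⟩ := hG
  refine le_csInf ⟨_, A, hA, hAG, rfl⟩ ?_
  rintro _ ⟨A, hA, hAG, rfl⟩
  obtain ⟨v, rfl, hrank⟩ := hA.exists_gram_eq
  exact hrank ▸ hr v fun i j hij => hAG i j hij

theorem mrPlus_corona_of_isTree {α β : Type} [Fintype α] [DecidableEq α] [Fintype β]
    [DecidableEq β] [Nontrivial β] {G : SimpleGraph α} {H : SimpleGraph β} (hG : G.IsTree)
    (hH : H.IsTree) :
    mrPlus 𝕜 (corona G H) = Fintype.card α * Fintype.card β - 1 := by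
  have hα : Nat.card G.edgeSet + 1 = Fintype.card α :=
    Nat.card_eq_fintype_card (α := α) ▸ (SimpleGraph.isTree_iff_connected_and_card.mp hG).2
  have hβ : Nat.card H.edgeSet + 1 = Fintype.card β :=
    Nat.card_eq_fintype_card (α := β) ▸ (SimpleGraph.isTree_iff_connected_and_card.mp hH).2
  have hcard : Nat.card G.edgeSet + Fintype.card α * Nat.card H.edgeSet =
      Fintype.card α * Fintype.card β - 1 := by
    rw [← hβ, mul_add, mul_one]
    omega
  obtain ⟨A, hA, hAG, hrank⟩ :=
    SimpleGraph.exists_posSemidef_rank_le_of_cliqueCover (𝕜 := 𝕜) (corona.cliqueCover G H)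
      corona.isClique_cliqueCover
      fun _ _ => corona.exists_mem_cliqueCover hH.connected.preconnected.exists_adj_of_nontrivial
  refine le_antisymm ((mrPlus_le_rank hA hAG).trans ?_) (le_mrPlus ⟨A, hA, hAG⟩ fun v hv => ?_)
  · rwa [Nat.card_sum, Nat.card_prod, Nat.card_eq_fintype_card (α := α), hcard] at hrank
  · rw [← hcard, Nat.eq_sub_of_add_eq hα, Nat.eq_sub_of_add_eq hβ]
    refine hv.le_finrank_span_corona (fun f hf => ?_) (fun f hf => ?_)
    · simpa using hf.card_sub_one_le_finrank_span_of_isTree hG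
    · simpa using hf.card_sub_one_le_finrank_span_of_isTree hH

end mrPlus

theorem mrPlus_corona_tree_tree_general (m m' : ℕ) (hm' : 2 ≤ m')
    (T : SimpleGraph (Fin m)) (hT : T.IsTree)
    (T' : SimpleGraph (Fin m')) (hT' : T'.IsTree) :
    mrPlus ℝ (corona T T') = m * m' - 1 ∧ mrPlus ℂ (corona T T') = m * m' - 1 := by
  have : Nontrivial (Fin m') := Fin.nontrivial_iff_two_le.mpr hm'
  have hR := mrPlus_corona_of_isTree (𝕜 := ℝ) hT hT'
  have hC := mrPlus_corona_of_isTree (𝕜 := ℂ) hT hT'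
  simp only [Fintype.card_fin] at hR hC
  exact ⟨hR, hC⟩

/-- for trees `T` of order `m ≥ 2` and `T'` of order `m' ≥ 2`,
`mr₊(T ∘ T') = mm' − 1`. -/
theorem mrPlus_corona_tree_tree (m m' : ℕ) (hm : 2 ≤ m) (hm' : 2 ≤ m')
    (T : SimpleGraph (Fin m)) (hT : T.IsTree)
    (T' : SimpleGraph (Fin m')) (hT' : T'.IsTree) :
    mrPlus ℝ (corona T T') = m * m' - 1 ∧ mrPlus ℂ (corona T T') = m * m' - 1 :=
  mrPlus_corona_tree_tree_general m m' hm' T hT T' hT'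
end
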